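/- For λ > 2 and λ⁻¹ < δ < 1, the number of lattice points k ∈ ℤ² with λ − δ < |k| < λ + δ is at most C(ε) λ^{1+ε} δ for every ε > 0. -/

import Mathlib

/-!
A lattice point `k` of the annulus has `|k|² = n` for one of the `O(λδ)` integers `n` in
`((λ - δ)², (λ + δ)²]`. A representation `n = x² + y²` gives the Gaussian divisor `x + iy` of
`n`, which is determined up to the four units by its normalized factorization; hence
`r₂(n) ≤ 4 d(n)`, where `d` counts divisors in `ℤ[i]`. The divisor bound `d(a) ≪_ε N(a)^ε` holds
in any factorial monoid with a multiplicative norm having finitely many elements of bounded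
norm: `e + 1 ≤ N(p)^{εe}` as soon as `N(p)^ε ≥ 2`, and the finitely many remaining primes
contribute a bounded factor.
-/

open UniqueFactorizationMonoid Finset

lemma exists_add_one_le_mul_pow {y : ℝ} (hy : 1 < y) :
    ∃ B : ℝ, 1 ≤ B ∧ ∀ e : ℕ, (e + 1 : ℝ) ≤ B * y ^ e := by
  refine ⟨max 1 (y - 1)⁻¹, le_max_left _ _, fun e => ?_⟩
  have hy' : 0 < y - 1 := sub_pos.mpr hy
  have hB : 1 ≤ max 1 (y - 1)⁻¹ * (y - 1) :=
    calc 1 = (y - 1)⁻¹ * (y - 1) := (inv_mul_cancel₀ hy'.ne').symm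
      _ ≤ _ := mul_le_mul_of_nonneg_right (le_max_right _ _) hy'.le
  calc (e + 1 : ℝ) ≤ max 1 (y - 1)⁻¹ * (1 + e * (y - 1)) := by
        nlinarith [le_max_left 1 (y - 1)⁻¹, (Nat.cast_nonneg e : (0 : ℝ) ≤ e)]
    _ ≤ max 1 (y - 1)⁻¹ * y ^ e := by
        gcongr
        simpa using one_add_mul_le_pow (a := y - 1) (by linarith) e

section DivisorCount

variable {R : Type*} [CommMonoidWithZero R] [NormalizationMonoid R]
  [UniqueFactorizationMonoid R] [DecidableEq R]

noncomputable def divisorCount (a : R) : ℕ :=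
  ∏ p ∈ (normalizedFactors a).toFinset, ((normalizedFactors a).count p + 1)

lemma card_Iic_normalizedFactors (a : R) :
    #(Iic (normalizedFactors a)) = divisorCount a :=
  Multiset.card_Iic _

lemma map_eq_prod_pow_count_normalizedFactors (N : R →* ℕ) {a : R} (ha : a ≠ 0) :
    N a = ∏ p ∈ (normalizedFactors a).toFinset, N p ^ (normalizedFactors a).count p := by
  obtain ⟨u, hu⟩ := prod_normalizedFactors ha
  nth_rw 1 [← hu]
  rw [map_mul, Nat.isUnit_iff.mp (u.isUnit.map N), mul_one, map_multiset_prod,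
    Finset.prod_multiset_map_count]

theorem divisorCount_le_mul_rpow (N : R →* ℕ) (hN : ∀ p, Prime p → 2 ≤ N p)
    (hfin : ∀ B : ℕ, {a : R | N a ≤ B}.Finite) {ε : ℝ} (hε : 0 < ε) :
    ∃ C : ℝ, 0 < C ∧ ∀ a : R, a ≠ 0 → (divisorCount a : ℝ) ≤ C * (N a : ℝ) ^ ε := by
  obtain ⟨B, hB, hBe⟩ := exists_add_one_le_mul_pow (Real.one_lt_rpow one_lt_two hε)
  set S := (hfin ⌊(2 : ℝ) ^ ε⁻¹⌋₊).toFinset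
  refine ⟨B ^ #S, by positivity, fun a ha => ?_⟩
  set F := normalizedFactors a
  have hN2 : ∀ p ∈ F.toFinset, (2 : ℝ) ≤ N p := fun p hp => by
    exact_mod_cast hN p (prime_of_normalized_factor p (Multiset.mem_toFinset.mp hp))
  -- Only the primes of `S` have `N p ^ ε < 2`; for the others `e + 1 ≤ 2 ^ e` suffices.
  have hfactor : ∀ p ∈ F.toFinset, ((F.count p : ℝ) + 1) ≤
      (if p ∈ S then B else 1) * (((N p : ℝ) ^ ε) ^ F.count p) := by
    intro p hp
    split_ifs with hpS
    · calc ((F.count p : ℝ) + 1) ≤ B * ((2 : ℝ) ^ ε) ^ F.count p := hBe _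
        _ ≤ B * ((N p : ℝ) ^ ε) ^ F.count p := by gcongr; exact hN2 p hp
    · have hlarge : (2 : ℝ) ≤ (N p : ℝ) ^ ε := by
        have : (2 : ℝ) ^ ε⁻¹ < N p := by
          simpa [S, Nat.floor_lt (Real.rpow_nonneg zero_le_two _)] using hpS
        calc (2 : ℝ) = ((2 : ℝ) ^ ε⁻¹) ^ ε := (Real.rpow_inv_rpow zero_le_two hε.ne').symm
          _ ≤ (N p : ℝ) ^ ε := by gcongr
      calc ((F.count p : ℝ) + 1) ≤ 2 ^ F.count p := by exact_mod_cast Nat.lt_two_pow_self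
        _ ≤ 1 * ((N p : ℝ) ^ ε) ^ F.count p := by rw [one_mul]; gcongr
  calc (divisorCount a : ℝ)
      ≤ ∏ p ∈ F.toFinset, (if p ∈ S then B else 1) * (((N p : ℝ) ^ ε) ^ F.count p) := by
        unfold divisorCount; push_cast
        exact prod_le_prod (fun _ _ => by positivity) hfactor
    _ = B ^ #(F.toFinset.filter (· ∈ S)) * (N a : ℝ) ^ ε := by
        rw [prod_mul_distrib, prod_ite, prod_const, prod_const_one, mul_one,
          map_eq_prod_pow_count_normalizedFactors N ha]
        push_cast
        rw [← Real.finsetProd_rpow _ _ (fun _ _ => by positivity)]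
        simp only [Real.rpow_pow_comm (Nat.cast_nonneg _)]
        rfl
    _ ≤ B ^ #S * (N a : ℝ) ^ ε := by
        gcongr
        exact fun p hp => (mem_filter.mp hp).2

end DivisorCount

noncomputable instance : StrongNormalizationMonoid GaussianInt :=
  UniqueFactorizationMonoid.strongNormalizationMonoid

namespace GaussianInt

def natAbsNormHom : GaussianInt →* ℕ := Int.natAbsHom.toMonoidHom.comp Zsqrtd.normMonoidHom

lemma two_le_natAbs_norm_of_prime {p : GaussianInt} (hp : Prime p) : 2 ≤ p.norm.natAbs := by
  have h0 : p.norm.natAbs ≠ 0 := by simpa [norm_eq_zero] using hp.ne_zero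
  have h1 : p.norm.natAbs ≠ 1 := fun h => hp.not_isUnit (Zsqrtd.norm_eq_one_iff.mp h)
  omega

lemma finite_setOf_natAbs_norm_le (B : ℕ) : {z : GaussianInt | z.norm.natAbs ≤ B}.Finite := by
  refine Set.Finite.of_finite_image (f := fun z : GaussianInt => (z.re, z.im)) ?_
    (fun x _ y _ h => Zsqrtd.ext (congrArg Prod.fst h) (congrArg Prod.snd h))
  refine ((Set.finite_Icc (-(B : ℤ)) B).prod (Set.finite_Icc (-(B : ℤ)) B)).subset ?_
  rintro _ ⟨z, hz, rfl⟩
  have hz : z.re * z.re + z.im * z.im ≤ B := by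
    have hz : (z.norm.natAbs : ℤ) ≤ B := Int.ofNat_le.mpr hz
    rw [abs_natCast_norm, Zsqrtd.norm_def] at hz
    linarith
  simp only [Set.mem_prod, Set.mem_Icc]
  refine ⟨⟨?_, ?_⟩, ?_, ?_⟩ <;> nlinarith [mul_self_nonneg (z.re + 1), mul_self_nonneg (z.re - 1),
    mul_self_nonneg (z.im + 1), mul_self_nonneg (z.im - 1)]

theorem divisorCount_le_mul_rpow {ε : ℝ} (hε : 0 < ε) :
    ∃ C : ℝ, 0 < C ∧ ∀ z : GaussianInt, z ≠ 0 →
      (divisorCount z : ℝ) ≤ C * (z.norm.natAbs : ℝ) ^ ε :=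
  _root_.divisorCount_le_mul_rpow natAbsNormHom
    (fun _ hp => two_le_natAbs_norm_of_prime hp) finite_setOf_natAbs_norm_le hε

end GaussianInt

noncomputable def sqAddSqReps (n : ℕ) : Finset (ℤ × ℤ) :=
  (Icc (-(n : ℤ)) n ×ˢ Icc (-(n : ℤ)) n).filter fun k => k.1 ^ 2 + k.2 ^ 2 = n

lemma mem_sqAddSqReps {n : ℕ} {k : ℤ × ℤ} : k ∈ sqAddSqReps n ↔ k.1 ^ 2 + k.2 ^ 2 = n := by
  refine ⟨fun hk => (mem_filter.mp hk).2, fun hk => mem_filter.mpr ⟨?_, hk⟩⟩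
  simp only [mem_product, mem_Icc]
  refine ⟨⟨?_, ?_⟩, ?_, ?_⟩ <;> nlinarith [sq_nonneg (k.1 + 1), sq_nonneg (k.1 - 1),
    sq_nonneg (k.2 + 1), sq_nonneg (k.2 - 1)]

lemma card_sqAddSqReps_one : #(sqAddSqReps 1) = 4 := by decide

def toGaussianInt : ℤ × ℤ ≃ GaussianInt where
  toFun k := ⟨k.1, k.2⟩
  invFun z := (z.re, z.im)
  left_inv _ := rfl
  right_inv _ := rfl

lemma norm_toGaussianInt (k : ℤ × ℤ) : (toGaussianInt k).norm = k.1 ^ 2 + k.2 ^ 2 := by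
  simp [toGaussianInt, Zsqrtd.norm_def]; ring

lemma toGaussianInt_dvd_of_mem_sqAddSqReps {n : ℕ} {k : ℤ × ℤ} (hk : k ∈ sqAddSqReps n) :
    toGaussianInt k ∣ (n : GaussianInt) :=
  ⟨star (toGaussianInt k), by
    rw [← Zsqrtd.norm_eq_mul_conj, norm_toGaussianInt, mem_sqAddSqReps.mp hk]; rfl⟩

lemma toGaussianInt_ne_zero_of_mem_sqAddSqReps {n : ℕ} (hn : n ≠ 0) {k : ℤ × ℤ}
    (hk : k ∈ sqAddSqReps n) : toGaussianInt k ≠ 0 := by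
  rw [Ne, ← GaussianInt.norm_eq_zero, norm_toGaussianInt, mem_sqAddSqReps.mp hk]
  exact_mod_cast hn

-- `k ↦ normalizedFactors k` is at most four-to-one: its fibres are orbits of the four units.
theorem card_sqAddSqReps_le (n : ℕ) (hn : n ≠ 0) :
    #(sqAddSqReps n) ≤ 4 * divisorCount (n : GaussianInt) := by
  have hn' : (n : GaussianInt) ≠ 0 := by exact_mod_cast hn
  set f : ℤ × ℤ → Multiset GaussianInt := fun k => normalizedFactors (toGaussianInt k)
  have hfibre : ∀ b ∈ (sqAddSqReps n).image f, #{k ∈ sqAddSqReps n | f k = b} ≤ 4 := by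
    simp only [mem_image]
    rintro _ ⟨k, hk, rfl⟩
    calc #{q ∈ sqAddSqReps n | f q = f k}
        ≤ #((sqAddSqReps 1).image fun v =>
            toGaussianInt.symm (toGaussianInt k * toGaussianInt v)) := by
          refine card_le_card fun q hq => ?_
          obtain ⟨hq, hfq⟩ := mem_filter.mp hq
          obtain ⟨u, hu⟩ := (associated_iff_normalizedFactors_eq_normalizedFactors
            (toGaussianInt_ne_zero_of_mem_sqAddSqReps hn hk)
            (toGaussianInt_ne_zero_of_mem_sqAddSqReps hn hq)).mpr hfq.symm
          refine mem_image.mpr ⟨toGaussianInt.symm u, mem_sqAddSqReps.mpr ?_, ?_⟩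
          · rw [← norm_toGaussianInt, Equiv.apply_symm_apply,
              (Zsqrtd.norm_eq_one_iff' (by norm_num) _).mpr u.isUnit, Nat.cast_one]
          · rw [Equiv.apply_symm_apply, hu, Equiv.symm_apply_apply]
      _ ≤ #(sqAddSqReps 1) := card_image_le
      _ = 4 := card_sqAddSqReps_one
  calc #(sqAddSqReps n) ≤ 4 * #((sqAddSqReps n).image f) := card_le_mul_card_image _ 4 hfibre
    _ ≤ 4 * #(Iic (normalizedFactors (n : GaussianInt))) := by
        refine Nat.mul_le_mul_left 4 (card_le_card fun _ hm => ?_)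
        obtain ⟨k, hk, rfl⟩ := mem_image.mp hm
        exact mem_Iic.mpr ((dvd_iff_normalizedFactors_le_normalizedFactors
          (toGaussianInt_ne_zero_of_mem_sqAddSqReps hn hk) hn').mp
          (toGaussianInt_dvd_of_mem_sqAddSqReps hk))
    _ = 4 * divisorCount (n : GaussianInt) := by rw [card_Iic_normalizedFactors]

theorem exists_card_sqAddSqReps_le_mul_rpow {ε : ℝ} (hε : 0 < ε) :
    ∃ C : ℝ, 0 < C ∧ ∀ n : ℕ, n ≠ 0 → (#(sqAddSqReps n) : ℝ) ≤ C * (n : ℝ) ^ ε := by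
  obtain ⟨C, hC, hdiv⟩ := GaussianInt.divisorCount_le_mul_rpow (half_pos hε)
  refine ⟨4 * C, by positivity, fun n hn => ?_⟩
  have hnorm : ((n : GaussianInt).norm.natAbs : ℝ) = (n : ℝ) ^ 2 := by
    rw [Zsqrtd.norm_natCast, Int.natAbs_mul, Int.natAbs_natCast]; push_cast; ring
  calc (#(sqAddSqReps n) : ℝ) ≤ 4 * divisorCount (n : GaussianInt) := by
        exact_mod_cast card_sqAddSqReps_le n hn
    _ ≤ 4 * (C * ((n : ℝ) ^ 2) ^ (ε / 2)) := by
        rw [← hnorm]; gcongr; exact hdiv _ (by exact_mod_cast hn)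
    _ = 4 * C * (n : ℝ) ^ ε := by
        rw [← Real.rpow_natCast, ← Real.rpow_mul (Nat.cast_nonneg n)]; ring_nf

lemma annulus_subset_biUnion_sqAddSqReps {a b : ℝ} (ha : 0 ≤ a) :
    {k : ℤ × ℤ | a < Real.sqrt ((k.1 : ℝ) ^ 2 + (k.2 : ℝ) ^ 2) ∧
        Real.sqrt ((k.1 : ℝ) ^ 2 + (k.2 : ℝ) ^ 2) < b} ⊆
      ↑((Ioc ⌊a ^ 2⌋₊ ⌊b ^ 2⌋₊).biUnion sqAddSqReps) := by
  rintro k ⟨hak, hkb⟩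
  have hk : ((k.1 ^ 2 + k.2 ^ 2).toNat : ℝ) = (k.1 : ℝ) ^ 2 + (k.2 : ℝ) ^ 2 := by
    exact_mod_cast Int.toNat_of_nonneg (by positivity)
  rw [(Real.lt_sqrt ha), ← hk] at hak
  replace hkb := Real.lt_sq_of_sqrt_lt hkb
  rw [← hk] at hkb
  simp only [coe_biUnion, coe_Ioc, Set.mem_iUnion, Set.mem_Ioc, mem_coe, exists_prop]
  refine ⟨_, ⟨(Nat.floor_lt (sq_nonneg a)).mpr hak, Nat.le_floor hkb.le⟩,
    mem_sqAddSqReps.mpr (Int.toNat_of_nonneg (by positivity)).symm⟩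

lemma card_Ioc_floor_sq_le {lam δ : ℝ} (hδ : 0 ≤ δ) (hδlam : δ ≤ lam) :
    (#(Ioc ⌊(lam - δ) ^ 2⌋₊ ⌊(lam + δ) ^ 2⌋₊) : ℝ) ≤ 4 * lam * δ + 1 := by
  rw [Nat.card_Ioc]
  rcases le_total ⌊(lam - δ) ^ 2⌋₊ ⌊(lam + δ) ^ 2⌋₊ with h | h
  · rw [Nat.cast_sub h]
    have := Nat.floor_le (sq_nonneg (lam + δ))
    have := Nat.lt_floor_add_one ((lam - δ) ^ 2)
    nlinarith
  · rw [Nat.sub_eq_zero_of_le h, Nat.cast_zero]; nlinarith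

/-- for `λ > 2` and `λ⁻¹ < δ < 1`, the number of lattice points in the
annulus `λ - δ < |k| < λ + δ` is at most `C(ε) λ^{1+ε} δ`. -/
theorem stmt2 :
    ∀ ε : ℝ, 0 < ε → ∃ C : ℝ, 0 < C ∧
      ∀ lam δ : ℝ, 2 < lam → lam⁻¹ < δ → δ < 1 →
        ({k : ℤ × ℤ |
            lam - δ < Real.sqrt ((k.1 : ℝ) ^ 2 + (k.2 : ℝ) ^ 2) ∧
            Real.sqrt ((k.1 : ℝ) ^ 2 + (k.2 : ℝ) ^ 2) < lam + δ}.ncard : ℝ)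
          ≤ C * lam ^ (1 + ε) * δ := by
  intro ε hε
  obtain ⟨C, hC, hreps⟩ := exists_card_sqAddSqReps_le_mul_rpow (half_pos hε)
  refine ⟨5 * C * 2 ^ ε, by positivity, fun lam δ hlam hδlam hδ1 => ?_⟩
  have hlamδ : 1 < lam * δ := (inv_lt_iff_one_lt_mul₀' (by positivity)).mp hδlam
  have hδ : 0 < δ := by nlinarith
  set I := Ioc ⌊(lam - δ) ^ 2⌋₊ ⌊(lam + δ) ^ 2⌋₊
  have hreps_I : ∀ n ∈ I, (#(sqAddSqReps n) : ℝ) ≤ C * 2 ^ ε * lam ^ ε := fun n hn => by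
    obtain ⟨hn0, hnb⟩ := mem_Ioc.mp hn
    have hn : (n : ℝ) ≤ (2 * lam) ^ 2 :=
      ((Nat.le_floor_iff (sq_nonneg _)).mp hnb).trans (by nlinarith)
    calc (#(sqAddSqReps n) : ℝ) ≤ C * (n : ℝ) ^ (ε / 2) := hreps n (by omega)
      _ ≤ C * ((2 * lam) ^ 2) ^ (ε / 2) := by gcongr
      _ = C * 2 ^ ε * lam ^ ε := by
        rw [← Real.rpow_natCast, ← Real.rpow_mul (by positivity), Real.mul_rpow (by norm_num)
          (by positivity)]
        ring_nf
  calc _ ≤ (#(I.biUnion sqAddSqReps) : ℝ) := by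
        exact_mod_cast (Set.ncard_le_ncard (annulus_subset_biUnion_sqAddSqReps (by linarith))
          (finite_toSet _)).trans_eq (Set.ncard_coe_finset _)
    _ ≤ ∑ n ∈ I, (#(sqAddSqReps n) : ℝ) := by exact_mod_cast card_biUnion_le
    _ ≤ #I * (C * 2 ^ ε * lam ^ ε) := by simpa using sum_le_sum hreps_I
    _ ≤ (4 * lam * δ + 1) * (C * 2 ^ ε * lam ^ ε) := by
        gcongr; exact card_Ioc_floor_sq_le hδ.le (by linarith)
    _ ≤ 5 * C * 2 ^ ε * lam ^ (1 + ε) * δ := by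
        rw [Real.rpow_add (by positivity), Real.rpow_one]
        have : 0 < C * 2 ^ ε * lam ^ ε := by positivity
        nlinarith
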